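/- Let p be a prime with p ≥ 7, let k ≥ 1 and d be integers, and for integers m, ε_a, ε_b with 0 ≤ m ≤ r(k) − 1 and ε_a, ε_b ∈ {0,1} set D(m, ε_a, ε_b) = m(2p³ − 2) + ε_a(2p^{[k+1]} − 1) + ε_b(2p^{[k+2]} − 1) + (2p^{[k]} − 1) − 2p³·d·p^{k−1}. If d ≥ p + 1, then D(m, ε_a, ε_b) ≤ −2p³ + 2p² − 1 for all such m, ε_a, ε_b; if d ≤ −1, then D(m, ε_a, ε_b) ≥ 2p³ + 2p − 1 for all such m, ε_a, ε_b. -/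

import Mathlib

/-!
Writing `k = K + 1`, the geometric sum `r(k) = p^k + p^{k-3} + ⋯` satisfies
`r(k) (p³ - 1) ≤ p^{K+4} - p`, and the exponents `[k+1], [k+2], [k]` are a permutation of
`1, 2, 3`. For `d ≥ p + 1` the largest degree, at `m = r(k) - 1` and `ε_a = ε_b = 1`, is then
at most `2p² - 1 - 2p^{K+3}`; for `d ≤ -1` the smallest, at `m = ε_a = ε_b = 0`, is at least
`2p^{[k]} - 1 + 2p^{K+3}`.
-/

/-- The total degree of `(tμ)^m λ_a^{ε_a} λ_b^{ε_b} λ_c μ^{-d P^K}` when `|λ_i| = 2P^i - 1`. -/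
def monomialDegree (P : ℤ) (K a b c : ℕ) (m εa εb d : ℤ) : ℤ :=
  m * (2 * P ^ 3 - 2) + εa * (2 * P ^ a - 1) + εb * (2 * P ^ b - 1) + (2 * P ^ c - 1)
    - 2 * P ^ 3 * d * P ^ K

theorem r_mul_pow_three_sub_one_le (p : ℕ) (r : ℤ → ℕ)
    (hr0 : r 0 = 0) (hrm1 : r (-1) = 0) (hrm2 : r (-2) = 0)
    (hrec : ∀ k : ℤ, 1 ≤ k → r k = p ^ k.toNat + r (k - 3)) (n : ℕ) :
    (r (n + 1) : ℤ) * ((p : ℤ) ^ 3 - 1) ≤ (p : ℤ) ^ (n + 4) - p := by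
  induction n using Nat.strong_induction_on with
  | _ n ih =>
    have hstep : (r (n + 1) : ℤ) * ((p : ℤ) ^ 3 - 1)
        = (p : ℤ) ^ (n + 4) - (p : ℤ) ^ (n + 1) + (r ((n : ℤ) - 2) : ℤ) * ((p : ℤ) ^ 3 - 1) := by
      rw [hrec _ (by omega), show ((n : ℤ) + 1 - 3) = n - 2 by ring]
      push_cast
      simp only [Int.toNat_natCast_add_one]
      ring
    rcases lt_or_ge n 3 with hn | hn
    · have hr : r ((n : ℤ) - 2) = 0 := by
        interval_cases n <;> simpa
      have hp : (p : ℤ) ≤ (p : ℤ) ^ (n + 1) := by exact_mod_cast Nat.le_self_pow n.succ_ne_zero p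
      rw [hstep, hr, Nat.cast_zero, zero_mul, add_zero]
      linarith
    · obtain ⟨n', rfl⟩ : ∃ n', n = n' + 3 := ⟨n - 3, by omega⟩
      have hih := ih n' (by omega)
      rw [hstep]
      push_cast at hih ⊢
      rw [show (n' : ℤ) + 3 - 2 = n' + 1 by ring]
      linarith

theorem pow_add_pow_add_pow_of_dvd_sub (P : ℤ) {k a b c : ℤ}
    (ha : a = 1 ∨ a = 2 ∨ a = 3) (hb : b = 1 ∨ b = 2 ∨ b = 3) (hc : c = 1 ∨ c = 2 ∨ c = 3)
    (hka : 3 ∣ k + 1 - a) (hkb : 3 ∣ k + 2 - b) (hkc : 3 ∣ k - c) :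
    P ^ a.toNat + P ^ b.toNat + P ^ c.toNat = P + P ^ 2 + P ^ 3 := by
  obtain ⟨rfl, rfl, rfl⟩ | ⟨rfl, rfl, rfl⟩ | ⟨rfl, rfl, rfl⟩ :
      (a = 1 ∧ b = 2 ∧ c = 3) ∨ (a = 2 ∧ b = 3 ∧ c = 1) ∨ (a = 3 ∧ b = 1 ∧ c = 2) := by
    omega
  all_goals simp only [show (1 : ℤ).toNat = 1 from rfl, show (2 : ℤ).toNat = 2 from rfl,
    show (3 : ℤ).toNat = 3 from rfl]; ring

section monomialDegree

variable {P R m εa εb d : ℤ} {K a b c : ℕ}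

theorem monomialDegree_le (hP : 1 ≤ P) (hm : m ≤ R - 1)
    (hR : R * (P ^ 3 - 1) ≤ P ^ (K + 4) - P)
    (hεa : εa = 0 ∨ εa = 1) (hεb : εb = 0 ∨ εb = 1)
    (hsum : P ^ a + P ^ b + P ^ c = P + P ^ 2 + P ^ 3) (hd : P + 1 ≤ d) :
    monomialDegree P K a b c m εa εb d ≤ -2 * P ^ 3 + 2 * P ^ 2 - 1 := by
  have hPK : 1 ≤ P ^ K := one_le_pow₀ hP
  have hεa' : εa * (2 * P ^ a - 1) ≤ 2 * P ^ a - 1 :=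
    mul_le_of_le_one_left (by linarith [one_le_pow₀ (n := a) hP]) (by omega)
  have hεb' : εb * (2 * P ^ b - 1) ≤ 2 * P ^ b - 1 :=
    mul_le_of_le_one_left (by linarith [one_le_pow₀ (n := b) hP]) (by omega)
  have hmR : m * (2 * P ^ 3 - 2) ≤ (R - 1) * (2 * P ^ 3 - 2) := by
    gcongr
    linarith [one_le_pow₀ (n := 3) hP]
  have hdP : 2 * P ^ 3 * (P + 1) * P ^ K ≤ 2 * P ^ 3 * d * P ^ K := by
    gcongr
  have hP3 : P ^ 3 ≤ P ^ 3 * P ^ K := le_mul_of_one_le_right (by positivity) hPK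
  rw [pow_add] at hR
  unfold monomialDegree
  linarith

theorem le_monomialDegree (hP : 1 ≤ P) (hm : 0 ≤ m)
    (hεa : εa = 0 ∨ εa = 1) (hεb : εb = 0 ∨ εb = 1) (hc : 1 ≤ c) (hd : d ≤ -1) :
    2 * P ^ 3 + 2 * P - 1 ≤ monomialDegree P K a b c m εa εb d := by
  have hm' : 0 ≤ m * (2 * P ^ 3 - 2) :=
    mul_nonneg hm (by linarith [one_le_pow₀ (n := 3) hP])
  have hεa' : 0 ≤ εa * (2 * P ^ a - 1) :=
    mul_nonneg (by omega) (by linarith [one_le_pow₀ (n := a) hP])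
  have hεb' : 0 ≤ εb * (2 * P ^ b - 1) :=
    mul_nonneg (by omega) (by linarith [one_le_pow₀ (n := b) hP])
  have hPc : P ≤ P ^ c := le_self_pow₀ hP (by omega)
  have hdP : 2 * P ^ 3 * d * P ^ K ≤ 2 * P ^ 3 * (-1) * P ^ K := by
    gcongr
  have hP3 : P ^ 3 ≤ P ^ 3 * P ^ K := le_mul_of_one_le_right (by positivity) (one_le_pow₀ hP)
  unfold monomialDegree
  linarith

end monomialDegree

theorem S_kd_degree_bounds_general (p : ℕ) (hp7 : 7 ≤ p)
    (r : ℤ → ℕ) (hr0 : r 0 = 0) (hrm1 : r (-1) = 0) (hrm2 : r (-2) = 0)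
    (hrec : ∀ k : ℤ, 1 ≤ k → r k = p ^ k.toNat + r (k - 3))
    (br : ℤ → ℤ)
    (hbr : ∀ k : ℤ, 1 ≤ k → (br k = 1 ∨ br k = 2 ∨ br k = 3) ∧ (3 : ℤ) ∣ (k - br k))
    (k : ℤ) (hk : 1 ≤ k) (d : ℤ) :
    ∀ m εa εb : ℤ, 0 ≤ m → m ≤ (r k : ℤ) - 1 →
      (εa = 0 ∨ εa = 1) → (εb = 0 ∨ εb = 1) →
    ∀ Dg : ℤ, Dg = m * (2 * (p : ℤ) ^ 3 - 2) + εa * (2 * (p : ℤ) ^ (br (k + 1)).toNat - 1)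
        + εb * (2 * (p : ℤ) ^ (br (k + 2)).toNat - 1) + (2 * (p : ℤ) ^ (br k).toNat - 1)
        - 2 * (p : ℤ) ^ 3 * d * (p : ℤ) ^ (k - 1).toNat →
      (((p : ℤ) + 1 ≤ d → Dg ≤ -2 * (p : ℤ) ^ 3 + 2 * (p : ℤ) ^ 2 - 1) ∧
       (d ≤ -1 → 2 * (p : ℤ) ^ 3 + 2 * (p : ℤ) - 1 ≤ Dg)) := by
  intro m εa εb hm0 hm1 hεa hεb Dg hDg
  obtain ⟨K, rfl⟩ : ∃ K : ℕ, k = K + 1 := ⟨(k - 1).toNat, by omega⟩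
  rw [show ((K : ℤ) + 1 - 1).toNat = K by omega] at hDg
  subst hDg
  have hP : (1 : ℤ) ≤ p := by exact_mod_cast (by omega : 1 ≤ p)
  obtain ⟨hc, hkc⟩ := hbr (K + 1) hk
  obtain ⟨ha, hka⟩ := hbr (K + 1 + 1) (by omega)
  obtain ⟨hb, hkb⟩ := hbr (K + 1 + 2) (by omega)
  exact ⟨monomialDegree_le hP hm1 (r_mul_pow_three_sub_one_le p r hr0 hrm1 hrm2 hrec K) hεa hεb
      (pow_add_pow_add_pow_of_dvd_sub (p : ℤ) ha hb hc hka hkb hkc),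
    le_monomialDegree hP hm0 hεa hεb (by omega)⟩

/-- Degree bounds for the basis monomials
`(tμ)^m λ_{[k+1]}^{ε_a} λ_{[k+2]}^{ε_b} λ_{[k]} μ^{−dp^{k−1}}` of `S(k,d)`:
for `d ≥ p + 1` all total degrees are `≤ −2p³ + 2p² − 1`, and for `d ≤ −1`
all total degrees are `≥ 2p³ + 2p − 1`. -/
theorem S_kd_degree_bounds (p : ℕ) (hp : p.Prime) (hp7 : 7 ≤ p)
    (r : ℤ → ℕ) (hr0 : r 0 = 0) (hrm1 : r (-1) = 0) (hrm2 : r (-2) = 0)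
    (hrec : ∀ k : ℤ, 1 ≤ k → r k = p ^ k.toNat + r (k - 3))
    (br : ℤ → ℤ)
    (hbr : ∀ k : ℤ, 1 ≤ k → (br k = 1 ∨ br k = 2 ∨ br k = 3) ∧ (3 : ℤ) ∣ (k - br k))
    (k : ℤ) (hk : 1 ≤ k) (d : ℤ) :
    ∀ m εa εb : ℤ, 0 ≤ m → m ≤ (r k : ℤ) - 1 →
      (εa = 0 ∨ εa = 1) → (εb = 0 ∨ εb = 1) →
    ∀ Dg : ℤ, Dg = m * (2 * (p : ℤ) ^ 3 - 2) + εa * (2 * (p : ℤ) ^ (br (k + 1)).toNat - 1)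
        + εb * (2 * (p : ℤ) ^ (br (k + 2)).toNat - 1) + (2 * (p : ℤ) ^ (br k).toNat - 1)
        - 2 * (p : ℤ) ^ 3 * d * (p : ℤ) ^ (k - 1).toNat →
      (((p : ℤ) + 1 ≤ d → Dg ≤ -2 * (p : ℤ) ^ 3 + 2 * (p : ℤ) ^ 2 - 1) ∧
       (d ≤ -1 → 2 * (p : ℤ) ^ 3 + 2 * (p : ℤ) - 1 ≤ Dg)) :=
  S_kd_degree_bounds_general p hp7 r hr0 hrm1 hrm2 hrec br hbr k hk d
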